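/- Let E and F be finite dimensional complex inner product spaces and let φ: E → F be a ℂ-linear map with operator norm ‖φ‖ ≤ 1. Then there exists a Hermitian inner product ⟨·,·⟩₀ on E × F such that: (a) for all x, x' ∈ E, ⟨(x, φx), (x', φx')⟩₀ = ⟨x, x'⟩_E (i.e., x ↦ (x, φx) is an isometric embedding of E into (E × F, ⟨·,·⟩₀)); and (b) the quotient norm on F induced by the second projection pr₂: (E × F, ⟨·,·⟩₀) → F equals the norm ‖·‖_F of F. -/

import Mathlib

/-!
Let `D = √(1 - φ†φ) ≥ 0`. Since `1 + D` is invertible and `1 - D² = (1 + D)(1 - D)`, the map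
`V = -(1 + D)⁻¹ φ†` satisfies `1 + V φ = D`. Pull back the `ℓ²` inner product of `E × F` along the
shear `(x, y) ↦ (x + V y, y)`. On the graph of `φ` it gives `⟪D x, D x'⟫ + ⟪φ x, φ x'⟫ = ⟪x, x'⟫`,
and since the shear leaves the first coordinate free over each `y`, the smallest norm in the fibre
over `y` is `‖y‖`.
-/

open ContinuousLinearMap

noncomputable abbrev InnerProductSpace.Core.comap {𝕜 G M : Type*} [RCLike 𝕜]
    [NormedAddCommGroup G] [InnerProductSpace 𝕜 G] [AddCommGroup M] [Module 𝕜 M]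
    (f : M →ₗ[𝕜] G) (hf : Function.Injective f) : InnerProductSpace.Core 𝕜 M where
  inner x y := inner 𝕜 (f x) (f y)
  conj_inner_symm x y := _root_.inner_conj_symm (f x) (f y)
  re_inner_nonneg x := _root_.inner_self_nonneg
  add_left x y z := by rw [map_add, _root_.inner_add_left]
  smul_left x y r := by rw [map_smul, _root_.inner_smul_left]
  definite x hx := hf <| by rwa [map_zero, ← _root_.inner_self_eq_zero (𝕜 := 𝕜)]

section Shear

variable {𝕜 E F : Type*} [RCLike 𝕜] [NormedAddCommGroup E] [InnerProductSpace 𝕜 E]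
  [NormedAddCommGroup F] [InnerProductSpace 𝕜 F]

def shearL2 (V : F →ₗ[𝕜] E) : E × F →ₗ[𝕜] WithLp 2 (E × F) :=
  (WithLp.linearEquiv 2 𝕜 (E × F)).symm.toLinearMap ∘ₗ
    ((LinearMap.fst 𝕜 E F + V ∘ₗ LinearMap.snd 𝕜 E F).prod (LinearMap.snd 𝕜 E F))

theorem shearL2_apply (V : F →ₗ[𝕜] E) (p : E × F) :
    shearL2 V p = WithLp.toLp 2 (p.1 + V p.2, p.2) := rfl

theorem shearL2_injective (V : F →ₗ[𝕜] E) : Function.Injective (shearL2 V) := by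
  intro p q h
  rw [shearL2_apply, shearL2_apply] at h
  obtain ⟨h1, h2⟩ := Prod.ext_iff.mp (WithLp.toLp_injective 2 h)
  rw [h2, add_left_inj] at h1
  exact Prod.ext h1 h2

noncomputable abbrev shearCore (V : F →ₗ[𝕜] E) : InnerProductSpace.Core 𝕜 (E × F) :=
  .comap (shearL2 V) (shearL2_injective V)

theorem shearCore_inner (V : F →ₗ[𝕜] E) (p q : E × F) :
    (shearCore V).inner p q = inner 𝕜 (p.1 + V p.2) (q.1 + V q.2) + inner 𝕜 p.2 q.2 :=
  WithLp.prod_inner_apply (shearL2 V p) (shearL2 V q)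

theorem sInf_shearCore_norm_fiber (V : F →ₗ[𝕜] E) (y : F) :
    sInf ((fun p : E × F => Real.sqrt (RCLike.re ((shearCore V).inner p p))) ''
      {p : E × F | p.2 = y}) = ‖y‖ := by
  have hnorm (p : E × F) : Real.sqrt (RCLike.re ((shearCore V).inner p p)) =
      Real.sqrt (‖p.1 + V p.2‖ ^ 2 + ‖p.2‖ ^ 2) := by
    rw [shearCore_inner, map_add, inner_self_eq_norm_sq, inner_self_eq_norm_sq]
  refine IsLeast.csInf_eq ⟨⟨(-V y, y), rfl, ?_⟩, ?_⟩
  · simp [hnorm]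
  · rintro _ ⟨p, rfl, rfl⟩
    dsimp only
    rw [hnorm]
    exact Real.le_sqrt_of_sq_le (le_add_of_nonneg_left (sq_nonneg _))

end Shear

theorem one_sub_inverse_one_add_mul_one_sub_sq {R : Type*} [Ring R] {d : R}
    (h : IsUnit (1 + d)) : 1 - Ring.inverse (1 + d) * (1 - d ^ 2) = d := by
  rw [show 1 - d ^ 2 = (1 + d) * (1 - d) by noncomm_ring, Ring.inverse_mul_cancel_left _ _ h]
  abel

theorem CStarAlgebra.exists_star_mul_self_one_sub_mul_eq_one_sub {A : Type*} [CStarAlgebra A]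
    [PartialOrder A] [StarOrderedRing A] {a : A} (ha : a ≤ 1) :
    ∃ w : A, star (1 - w * a) * (1 - w * a) = 1 - a := by
  obtain ⟨d, hd0, hd⟩ : ∃ d : A, 0 ≤ d ∧ d ^ 2 = 1 - a :=
    ⟨CFC.sqrt (1 - a), CFC.sqrt_nonneg _, CFC.sq_sqrt _ (sub_nonneg.mpr ha)⟩
  have hunit : IsUnit (1 + d) := (isStrictlyPositive_one.add_nonneg hd0).isUnit
  have ha' : a = 1 - d ^ 2 := by rw [hd, sub_sub_cancel]
  refine ⟨Ring.inverse (1 + d), ?_⟩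
  rw [← hd, ha', one_sub_inverse_one_add_mul_one_sub_sq hunit,
    hd0.isSelfAdjoint.star_eq, ← sq]

theorem ContinuousLinearMap.exists_inner_graph_eq {E F : Type*}
    [NormedAddCommGroup E] [InnerProductSpace ℂ E] [CompleteSpace E]
    [NormedAddCommGroup F] [InnerProductSpace ℂ F] [CompleteSpace F]
    (φ : E →L[ℂ] F) (hφ : ‖φ‖ ≤ 1) :
    ∃ V : F →L[ℂ] E, ∀ x x' : E,
      inner ℂ (x + V (φ x)) (x' + V (φ x')) + inner ℂ (φ x) (φ x') = inner ℂ x x' := by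
  have hpos : 0 ≤ adjoint φ ∘L φ := (nonneg_iff_isPositive _).mpr (isPositive_adjoint_comp_self φ)
  have hle : adjoint φ ∘L φ ≤ 1 := by
    rw [← CStarAlgebra.norm_le_one_iff_of_nonneg _ hpos, norm_adjoint_comp_self]
    nlinarith [norm_nonneg φ]
  obtain ⟨w, hw⟩ := CStarAlgebra.exists_star_mul_self_one_sub_mul_eq_one_sub hle
  refine ⟨-(w ∘L adjoint φ), fun x x' => ?_⟩
  have hgraph : ∀ x, x + (-(w ∘L adjoint φ)) (φ x) = (1 - w * (adjoint φ ∘L φ)) x := fun x => by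
    simp [sub_eq_add_neg]
  rw [hgraph, hgraph, ← adjoint_inner_right, ← star_eq_adjoint, ← mul_apply_eq_comp, hw]
  simp [inner_sub_right, adjoint_inner_right]

/-- **Statement 9.** Let `E` and `F` be finite dimensional complex inner product
spaces and `φ : E → F` a linear map of operator norm `≤ 1`. Then there exists a
Hermitian inner product `⟨·,·⟩₀` on `E × F` such that (a) `x ↦ (x, φ x)` is an
isometric embedding of `E` into `(E × F, ⟨·,·⟩₀)`, and (b) the quotient norm on `F`
induced by the second projection from `(E × F, ⟨·,·⟩₀)` equals the norm of `F`. -/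
theorem stmt9 {E F : Type*}
    [NormedAddCommGroup E] [InnerProductSpace ℂ E] [FiniteDimensional ℂ E]
    [NormedAddCommGroup F] [InnerProductSpace ℂ F] [FiniteDimensional ℂ F]
    (φ : E →L[ℂ] F) (hφ : ‖φ‖ ≤ 1) :
    ∃ core : InnerProductSpace.Core ℂ (E × F),
      (∀ x x' : E,
        core.inner (x, φ x) (x', φ x') = (inner ℂ x x' : ℂ)) ∧
      (∀ y : F,
        sInf ((fun p : E × F => Real.sqrt (core.inner p p).re) ''
          {p : E × F | p.2 = y}) = ‖y‖) := by
  have : CompleteSpace E := FiniteDimensional.complete ℂ E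
  have : CompleteSpace F := FiniteDimensional.complete ℂ F
  obtain ⟨V, hV⟩ := φ.exists_inner_graph_eq hφ
  refine ⟨shearCore (V : F →ₗ[ℂ] E), fun x x' => ?_, sInf_shearCore_norm_fiber (V : F →ₗ[ℂ] E)⟩
  rw [shearCore_inner]
  exact hV x x'
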